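/- arXiv:2505.06691 — 2 statements merged into one kernel-verified Lean document; each statement's English description precedes it below -/
import Mathlib

section
/- Let A be Hurwitz, Q = Qᵀ > 0, P = Pᵀ > 0 with AᵀP + PA = −Q. Let G : ℝ → ℝ^N be differentiable satisfying G'(t) = (1/ω)(A G(t) + A e(t)) with ‖e(t)‖ ≤ σ̄ ‖G(t)‖ where σ̄ < λ_min(Q)/(2‖PA‖) and ω > 0. Then V(t) := G(t)ᵀ P G(t) satisfies V'(t) ≤ −(λ_min(Q)/ω)·(1 − 2‖PA‖σ̄/λ_min(Q))·‖G(t)‖² < 0 whenever G(t) ≠ 0. -/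
/-!
Along a trajectory, the symmetry of `P` and the Lyapunov equation give
`V' = ω⁻¹ (-Gᵀ Q G + 2 Gᵀ P A e)`. Since `Q - λ_min(Q) I` is positive semidefinite the first
term is at most `-λ_min(Q) ‖G‖²`, and by Cauchy–Schwarz and `‖e‖ ≤ σ̄ ‖G‖` the second is at most
`2 ‖PA‖ σ̄ ‖G‖²`; the condition on `σ̄` makes the sum negative.
-/

open Matrix
open scoped Matrix.Norms.L2Operator

/-- The Euclidean norm of a vector in `ℝ^N`. -/
noncomputable def eucNorm {N : ℕ} (x : Fin N → ℝ) : ℝ :=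
  ‖(EuclideanSpace.equiv (Fin N) ℝ).symm x‖

/-- A real square matrix is Hurwitz if all of its (complex) eigenvalues have
negative real part. -/
def IsHurwitz {N : ℕ} (A : Matrix (Fin N) (Fin N) ℝ) : Prop :=
  ∀ μ ∈ spectrum ℂ (A.map (Complex.ofReal)), μ.re < 0

section EuclideanNorm

variable {m N : ℕ}

theorem eucNorm_sq (x : Fin N → ℝ) : eucNorm x ^ 2 = x ⬝ᵥ x := by
  rw [eucNorm, ← real_inner_self_eq_norm_sq, EuclideanSpace.inner_eq_star_dotProduct]
  simp

theorem dotProduct_le_eucNorm_mul_eucNorm (x y : Fin N → ℝ) :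
    x ⬝ᵥ y ≤ eucNorm x * eucNorm y := by
  have h := real_inner_le_norm ((EuclideanSpace.equiv (Fin N) ℝ).symm x)
    ((EuclideanSpace.equiv (Fin N) ℝ).symm y)
  rw [EuclideanSpace.inner_eq_star_dotProduct] at h
  simpa [eucNorm, dotProduct_comm] using h

theorem eucNorm_mulVec_le (M : Matrix (Fin m) (Fin N) ℝ) (x : Fin N → ℝ) :
    eucNorm (M *ᵥ x) ≤ ‖M‖ * eucNorm x :=
  M.l2_opNorm_mulVec ((EuclideanSpace.equiv (Fin N) ℝ).symm x)

theorem eucNorm_pos {x : Fin N → ℝ} (hx : x ≠ 0) : 0 < eucNorm x := by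
  simpa [eucNorm] using hx

theorem dotProduct_mulVec_le_of_eucNorm_le (M : Matrix (Fin N) (Fin N) ℝ) {x e : Fin N → ℝ}
    {σ : ℝ} (he : eucNorm e ≤ σ * eucNorm x) :
    x ⬝ᵥ M *ᵥ e ≤ ‖M‖ * σ * eucNorm x ^ 2 :=
  calc x ⬝ᵥ M *ᵥ e ≤ eucNorm x * eucNorm (M *ᵥ e) := dotProduct_le_eucNorm_mul_eucNorm _ _
    _ ≤ eucNorm x * (‖M‖ * (σ * eucNorm x)) := by
      gcongr
      · exact norm_nonneg _
      · exact (eucNorm_mulVec_le M e).trans (by gcongr)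
    _ = ‖M‖ * σ * eucNorm x ^ 2 := by ring

end EuclideanNorm

section Lyapunov

variable {n R : Type*} [Fintype n] [CommRing R] {A P Q : Matrix n n R}

theorem Matrix.IsSymm.dotProduct_mulVec_comm (hP : P.IsSymm) (u v : n → R) :
    u ⬝ᵥ P *ᵥ v = v ⬝ᵥ P *ᵥ u := by
  rw [dotProduct_mulVec, ← mulVec_transpose, hP.eq, dotProduct_comm]

theorem Matrix.IsSymm.two_mul_dotProduct_mul_mulVec_self (hP : P.IsSymm)
    (hlyap : Aᵀ * P + P * A = -Q) (u : n → R) :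
    2 * (u ⬝ᵥ (P * A) *ᵥ u) = -(u ⬝ᵥ Q *ᵥ u) := by
  have hsymm : u ⬝ᵥ (Aᵀ * P) *ᵥ u = u ⬝ᵥ (P * A) *ᵥ u := by
    rw [← mulVec_mulVec, dotProduct_mulVec, vecMul_transpose, ← mulVec_mulVec,
      hP.dotProduct_mulVec_comm]
  rw [← dotProduct_neg, ← neg_mulVec, ← hlyap, add_mulVec, dotProduct_add, hsymm, two_mul]

theorem Matrix.IsSymm.lyapunov_derivative_eq (hP : P.IsSymm) (hlyap : Aᵀ * P + P * A = -Q)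
    (c : R) (u e : n → R) :
    (c • (A *ᵥ u + A *ᵥ e)) ⬝ᵥ P *ᵥ u + u ⬝ᵥ P *ᵥ (c • (A *ᵥ u + A *ᵥ e)) =
      c * (-(u ⬝ᵥ Q *ᵥ u) + 2 * (u ⬝ᵥ (P * A) *ᵥ e)) := by
  rw [← hP.dotProduct_mulVec_comm, ← two_mul, mulVec_smul, dotProduct_smul, mulVec_add,
    dotProduct_add, mulVec_mulVec, mulVec_mulVec, ← hP.two_mul_dotProduct_mul_mulVec_self hlyap,
    smul_eq_mul]
  ring

end Lyapunov

section Derivative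

variable {𝕜 ι κ : Type*} [NontriviallyNormedField 𝕜] [Fintype ι]
  {f g : 𝕜 → ι → 𝕜} {f' g' : ι → 𝕜} {t : 𝕜}

theorem HasDerivAt.dotProduct (hf : HasDerivAt f f' t) (hg : HasDerivAt g g' t) :
    HasDerivAt (fun s => f s ⬝ᵥ g s) (f' ⬝ᵥ g t + f t ⬝ᵥ g') t := by
  have h := HasDerivAt.fun_sum fun i (_ : i ∈ Finset.univ) =>
    (hasDerivAt_pi.mp hf i).fun_mul (hasDerivAt_pi.mp hg i)
  rw [Finset.sum_add_distrib] at h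
  exact h

theorem HasDerivAt.mulVec (M : Matrix κ ι 𝕜) (hf : HasDerivAt f f' t) :
    HasDerivAt (fun s => M *ᵥ f s) (M *ᵥ f') t :=
  hasDerivAt_pi.mpr fun i => HasDerivAt.fun_sum fun j _ => (hasDerivAt_pi.mp hf j).const_mul (M i j)

end Derivative

open scoped MatrixOrder in
theorem Matrix.IsHermitian.iInf_eigenvalues_mul_dotProduct_self_le {n : Type*} [Fintype n]
    [DecidableEq n] {Q : Matrix n n ℝ} (hQ : Q.IsHermitian) (x : n → ℝ) :
    (⨅ i, hQ.eigenvalues i) * (x ⬝ᵥ x) ≤ x ⬝ᵥ Q *ᵥ x := by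
  have hle : algebraMap ℝ (Matrix n n ℝ) (⨅ i, hQ.eigenvalues i) ≤ Q := by
    refine algebraMap_le_of_le_spectrum fun μ hμ => ?_
    rw [hQ.spectrum_real_eq_range_eigenvalues] at hμ
    obtain ⟨i, rfl⟩ := hμ
    exact ciInf_le (Set.finite_range _).bddBelow i
  have h := (Matrix.le_iff.mp hle).dotProduct_mulVec_nonneg x
  rw [sub_mulVec, dotProduct_sub, Algebra.algebraMap_eq_smul_one, smul_mulVec, one_mulVec,
    dotProduct_smul] at h
  simpa [sub_nonneg] using h

open scoped ComplexOrder in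
theorem Matrix.PosDef.iInf_eigenvalues_pos {n 𝕜 : Type*} [Fintype n] [Nonempty n]
    [DecidableEq n] [RCLike 𝕜] {Q : Matrix n n 𝕜} (hQ : Q.PosDef) :
    0 < ⨅ i, hQ.1.eigenvalues i := by
  obtain ⟨i, hi⟩ := exists_eq_ciInf_of_finite (f := hQ.1.eigenvalues)
  exact hi ▸ hQ.eigenvalues_pos i

theorem lyapunov_decay_estimate_general {N : ℕ} [NeZero N]
    (A Q P : Matrix (Fin N) (Fin N) ℝ)
    (hQ : Q.PosDef) (hP : P.PosDef)
    (hlyap : Aᵀ * P + P * A = -Q)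
    (ω σbar : ℝ) (hω : 0 < ω)
    (hσ : σbar < (⨅ i, hQ.1.eigenvalues i) / (2 * ‖P * A‖))
    (G e : ℝ → Fin N → ℝ)
    (hG : ∀ t, HasDerivAt G ((1 / ω) • (A.mulVec (G t) + A.mulVec (e t))) t)
    (he : ∀ t, eucNorm (e t) ≤ σbar * eucNorm (G t)) :
    ∀ t : ℝ, ∃ v' : ℝ,
      HasDerivAt (fun s => G s ⬝ᵥ P.mulVec (G s)) v' t ∧
      v' ≤ -((⨅ i, hQ.1.eigenvalues i) / ω) *
            (1 - 2 * ‖P * A‖ * σbar / (⨅ i, hQ.1.eigenvalues i)) * eucNorm (G t) ^ 2 ∧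
      (G t ≠ 0 → v' < 0) := by
  intro t
  set c := ⨅ i, hQ.1.eigenvalues i
  set g := eucNorm (G t)
  have hc : 0 < c := hQ.iInf_eigenvalues_pos
  have hσ_lt : 2 * ‖P * A‖ * σbar < c := by
    rcases (norm_nonneg (P * A)).eq_or_lt with h | h
    · simpa [← h] using hc
    · exact (lt_div_iff₀' (by positivity)).mp hσ
  have hPsymm : P.IsSymm := (conjTranspose_eq_transpose_of_trivial P).symm.trans hP.1
  have hderiv := ((hG t).dotProduct ((hG t).mulVec P)).congr_deriv
    (hPsymm.lyapunov_derivative_eq hlyap (1 / ω) (G t) (e t))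
  have hbound : (1 / ω) * (-(G t ⬝ᵥ Q *ᵥ G t) + 2 * (G t ⬝ᵥ (P * A) *ᵥ e t)) ≤
      (1 / ω) * (-(c * g ^ 2) + 2 * (‖P * A‖ * σbar * g ^ 2)) := by
    have hquad : c * g ^ 2 ≤ G t ⬝ᵥ Q *ᵥ G t :=
      eucNorm_sq (G t) ▸ hQ.1.iInf_eigenvalues_mul_dotProduct_self_le (G t)
    have hcross := dotProduct_mulVec_le_of_eucNorm_le (P * A) (he t)
    gcongr
  refine ⟨_, hderiv, hbound.trans_eq (by field_simp; ring), fun hGt =>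
    hbound.trans_lt (mul_neg_of_pos_of_neg (by positivity) ?_)⟩
  nlinarith [mul_pos (sub_pos.mpr hσ_lt) (pow_pos (eucNorm_pos hGt) 2)]

/-- Core Lyapunov decay estimate for the average closed-loop ET-NES system:
`V' ≤ -(λ_min(Q)/ω)(1 - 2‖PA‖σ̄/λ_min(Q))‖G‖²`, strictly negative off the origin. -/
theorem lyapunov_decay_estimate {N : ℕ} [NeZero N]
    (A Q P : Matrix (Fin N) (Fin N) ℝ)
    (hA : IsHurwitz A) (hQ : Q.PosDef) (hP : P.PosDef)
    (hlyap : Aᵀ * P + P * A = -Q)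
    (ω σbar : ℝ) (hω : 0 < ω)
    (hσ : σbar < (⨅ i, hQ.1.eigenvalues i) / (2 * ‖P * A‖))
    (G e : ℝ → Fin N → ℝ)
    (hG : ∀ t, HasDerivAt G ((1 / ω) • (A.mulVec (G t) + A.mulVec (e t))) t)
    (he : ∀ t, eucNorm (e t) ≤ σbar * eucNorm (G t)) :
    ∀ t : ℝ, ∃ v' : ℝ,
      HasDerivAt (fun s => G s ⬝ᵥ P.mulVec (G s)) v' t ∧
      v' ≤ -((⨅ i, hQ.1.eigenvalues i) / ω) *
            (1 - 2 * ‖P * A‖ * σbar / (⨅ i, hQ.1.eigenvalues i)) * eucNorm (G t) ^ 2 ∧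
      (G t ≠ 0 → v' < 0) :=
  lyapunov_decay_estimate_general A Q P hQ hP hlyap ω σbar hω hσ G e hG he
end

section
/- Let φ : [0,∞) → ℝ be differentiable with φ(0) = 0 and φ'(t) ≤ C·(k + φ(t))² for constants C, k > 0. Then φ(t) ≤ k/(1 − C k t) − k for all t ∈ [0, 1/(Ck)). Consequently the first time φ can reach the value 1 is at least τ* = 1/(C k (k+1)) > 0. -/
open Set Filter Topology

/-! The shifted quantity `u = k + φ` satisfies `u' ≤ C u²`, and `x ↦ u₀ / (1 - D u₀ x)` solves
`B' = D B²` exactly. For `D > C` the graph of `u` can therefore only cross this barrier from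
above, so `u` stays below it; letting `D ↓ C` gives the comparison with the Riccati solution
itself. Below `τ* = 1/(Ck(k+1))` that solution is `< k + 1`, i.e. `φ < 1`. -/

section RiccatiBarrier

variable {C D u₀ t : ℝ} {u u' : ℝ → ℝ}

lemma hasDerivAt_riccati_barrier {x : ℝ} (hne : 1 - D * u₀ * x ≠ 0) :
    HasDerivAt (fun x => u₀ / (1 - D * u₀ * x)) (D * (u₀ / (1 - D * u₀ * x)) ^ 2) x := by
  have hden : HasDerivAt (fun x => 1 - D * u₀ * x) (-(D * u₀)) x := by
    simpa using ((hasDerivAt_id x).const_mul (D * u₀)).const_sub 1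
  refine ((hasDerivAt_const x u₀).div hden hne).congr_deriv ?_
  field_simp
  ring

lemma le_riccati_barrier_of_lt (hu₀ : 0 < u₀) (hD : 0 ≤ D) (hCD : C < D)
    (hcont : ContinuousOn u (Icc 0 t))
    (hderiv : ∀ x ∈ Ico 0 t, HasDerivWithinAt u (u' x) (Ici x) x)
    (hineq : ∀ x ∈ Ico 0 t, u' x ≤ C * u x ^ 2) (h0 : u 0 ≤ u₀)
    (ht0 : 0 ≤ t) (ht : D * u₀ * t < 1) :
    u t ≤ u₀ / (1 - D * u₀ * t) := by
  have hpos : ∀ x ∈ Icc 0 t, 0 < 1 - D * u₀ * x := fun x hx => by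
    nlinarith [mul_le_mul_of_nonneg_left hx.2 (mul_nonneg hD hu₀.le)]
  have hB : ∀ x ∈ Icc 0 t, HasDerivAt (fun x => u₀ / (1 - D * u₀ * x))
      (D * (u₀ / (1 - D * u₀ * x)) ^ 2) x :=
    fun x hx => hasDerivAt_riccati_barrier (hpos x hx).ne'
  refine image_le_of_deriv_right_lt_deriv_boundary' hcont hderiv (by simpa using h0)
    (fun x hx => (hB x hx).continuousAt.continuousWithinAt)
    (fun x hx => (hB x (Ico_subset_Icc_self hx)).hasDerivWithinAt)
    (fun x hx hux => ?_) (right_mem_Icc.2 ht0)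
  calc u' x ≤ C * u x ^ 2 := hineq x hx
    _ < D * (u₀ / (1 - D * u₀ * x)) ^ 2 := by
      rw [hux]; exact mul_lt_mul_of_pos_right hCD
        (pow_pos (div_pos hu₀ (hpos x (Ico_subset_Icc_self hx))) 2)

lemma le_riccati_solution (hu₀ : 0 < u₀) (hC : 0 ≤ C)
    (hcont : ContinuousOn u (Icc 0 t))
    (hderiv : ∀ x ∈ Ico 0 t, HasDerivWithinAt u (u' x) (Ici x) x)
    (hineq : ∀ x ∈ Ico 0 t, u' x ≤ C * u x ^ 2) (h0 : u 0 ≤ u₀)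
    (ht0 : 0 ≤ t) (ht : C * u₀ * t < 1) :
    u t ≤ u₀ / (1 - C * u₀ * t) := by
  have hcontD : ContinuousAt (fun D => u₀ / (1 - D * u₀ * t)) C :=
    continuousAt_const.div (by fun_prop) (sub_ne_zero.2 ht.ne')
  have hsmall : ∀ᶠ D in 𝓝 C, D * u₀ * t < 1 :=
    ContinuousAt.eventually_lt (by fun_prop) continuousAt_const ht
  refine ge_of_tendsto (hcontD.tendsto.mono_left (nhdsWithin_le_nhds (s := Ioi C))) ?_
  filter_upwards [self_mem_nhdsWithin, nhdsWithin_le_nhds hsmall] with D hCD hD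
  exact le_riccati_barrier_of_lt hu₀ (hC.trans hCD.le) hCD hcont hderiv hineq h0 ht0 hD

end RiccatiBarrier

/-- Comparison lemma for the Riccati differential inequality `φ' ≤ C(k + φ)²`, `φ(0) = 0`:
`φ(t) ≤ k/(1 - Ckt) - k` on `[0, 1/(Ck))`, and `φ` stays below 1 before
`τ* = 1/(Ck(k+1)) > 0` (no Zeno behavior). -/
theorem riccati_comparison (C k : ℝ) (hC : 0 < C) (hk : 0 < k)
    (φ φ' : ℝ → ℝ) (h0 : φ 0 = 0)
    (hderiv : ∀ t, 0 ≤ t → HasDerivAt φ (φ' t) t)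
    (hineq : ∀ t, 0 ≤ t → φ' t ≤ C * (k + φ t) ^ 2) :
    (∀ t, 0 ≤ t → t < 1 / (C * k) → φ t ≤ k / (1 - C * k * t) - k) ∧
    (0 < 1 / (C * k * (k + 1)) ∧
      ∀ t, 0 ≤ t → t < 1 / (C * k * (k + 1)) → φ t < 1) := by
  have hCk : 0 < C * k := mul_pos hC hk
  have bound : ∀ t, 0 ≤ t → t < 1 / (C * k) → φ t ≤ k / (1 - C * k * t) - k := by
    intro t ht0 ht
    have hshift := le_riccati_solution (u := fun x => k + φ x) (u' := φ') hk hC.le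
      (fun x hx => (hderiv x hx.1).continuousAt.continuousWithinAt.const_add k)
      (fun x hx => ((hderiv x hx.1).const_add k).hasDerivWithinAt)
      (fun x hx => hineq x hx.1) (by simp [h0]) ht0 (by rwa [lt_div_iff₀ hCk, mul_comm] at ht)
    linarith
  refine ⟨bound, by positivity, fun t ht0 ht => ?_⟩
  rw [lt_div_iff₀ (by positivity)] at ht
  have hCkt : C * k * t * k + C * k * t < 1 := by linarith
  have hsub : 0 < 1 - C * k * t := by nlinarith
  have hsolution : k / (1 - C * k * t) < k + 1 := by rw [div_lt_iff₀ hsub]; nlinarith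
  linarith [bound t ht0 (by rw [lt_div_iff₀ hCk]; nlinarith)]
end
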